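/- arXiv:1505.04829 — 4 statements merged into one kernel-verified Lean document; each statement's English description precedes it below -/
import Mathlib

section
/- Let p : ℤ → ℝ be a probability mass function that is symmetric (p_e = p_{−e}) and unimodal (p_e ≥ p_{e+1} for all e ≥ 0), let d : ℤ → ℝ be bounded, even, with d(0) = 0 and nondecreasing on nonnegative integers (d(e₁) ≥ d(e₂) for e₁ > e₂ > 0), and fix a ∈ ℤ_{>0}, λ > 0, β ∈ (0,1) and a horizon T. Define V_{T+1} ≡ 0 and, for t = T,…,1, V_t(e) = min{ (1−β)λ + β Σ_{n∈ℤ} p_n V_{t+1}(n), (1−β)d(e) + β Σ_{n∈ℤ} p_{n−ae} V_{t+1}(n) }. Then every V_t is even and nondecreasing on ℤ_{≥0}: V_t(e) = V_t(−e) and V_t(e) ≤ V_t(e+1) for all e ≥ 0. -/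
/-!
Write `V_t(e) = min(A_t, (1-β) d(e) + β E[V_{t+1}(ae + W)])` with `A_t` independent of `e`.
Evenness, monotonicity on `ℤ_{≥0}` and boundedness are preserved by nonnegative linear
combinations, by `e ↦ f(ae)` for `a ≥ 0`, by `min` with a constant, and by the averaging
`c ↦ E[f(c + W)]` against a symmetric unimodal pmf; the last point is the only real one.
Its increment `E[f(c + 1 + W)] - E[f(c + W)] = Σ_j p(j - c) (f(j + 1) - f(j))` is a sum
whose terms at `j` and `-(j + 1)` combine to `(p(j - c) - p(j + 1 + c)) (f(j + 1) - f(j)) ≥ 0`,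
because `|j - c| ≤ j + 1 + c`. A backward induction from `V_{T+1} ≡ 0` concludes.
-/

open Set

/-- `shiftMean p f c = E[f(c + W)]` when `W` has pmf `p`. -/
noncomputable def shiftMean (p f : ℤ → ℝ) (c : ℤ) : ℝ := ∑' n, p (n - c) * f n

structure IsEvenMonotoneBounded (f : ℤ → ℝ) : Prop where
  even : f.Even
  monotoneOn : MonotoneOn f (Ici 0)
  bdd : ∃ C, ∀ n, |f n| ≤ C

section Weighted

variable {w f : ℤ → ℝ} {C : ℝ}

lemma summable_mul_of_abs_le (hw0 : ∀ n, 0 ≤ w n) (hw : Summable w) (hf : ∀ n, |f n| ≤ C) :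
    Summable fun n => w n * f n :=
  (hw.mul_right C).of_norm_bounded fun n => by
    rw [Real.norm_eq_abs, abs_mul, abs_of_nonneg (hw0 n)]
    exact mul_le_mul_of_nonneg_left (hf n) (hw0 n)

lemma abs_tsum_mul_le (hw0 : ∀ n, 0 ≤ w n) (hw : HasSum w 1) (hf : ∀ n, |f n| ≤ C) :
    |∑' n, w n * f n| ≤ C := by
  have hs := (summable_mul_of_abs_le hw0 hw.summable hf).hasSum
  have hneg : HasSum (fun n => w n * -C) (-C) := by simpa using hw.mul_right (-C)
  rw [abs_le]
  constructor
  · refine hasSum_le (fun n => ?_) hneg hs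
    exact mul_le_mul_of_nonneg_left (neg_le_of_abs_le (hf n)) (hw0 n)
  · refine hasSum_le (fun n => ?_) hs (by simpa using hw.mul_right C)
    exact mul_le_mul_of_nonneg_left (le_of_abs_le (hf n)) (hw0 n)

end Weighted

lemma Function.Even.apply_le_apply_of_abs_le {p : ℤ → ℝ} (hp_even : p.Even)
    (hp_anti : AntitoneOn p (Ici 0)) {x y : ℤ} (h : |x| ≤ |y|) : p y ≤ p x := by
  have habs : ∀ z, p |z| = p z := fun z => by
    rcases abs_choice z with hz | hz <;> rw [hz]
    exact hp_even z
  rw [← habs x, ← habs y]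
  exact hp_anti (abs_nonneg x) (abs_nonneg y) h

section ShiftMean

variable {p f : ℤ → ℝ}

lemma hasSum_comp_sub (hp : HasSum p 1) (c : ℤ) : HasSum (fun n => p (n - c)) 1 :=
  (Equiv.subRight c).hasSum_iff.mpr hp

lemma shiftMean_add_one (c : ℤ) : shiftMean p f (c + 1) = ∑' n, p (n - c) * f (n + 1) := by
  rw [shiftMean, ← (Equiv.addRight 1).tsum_eq]
  simp only [Equiv.coe_addRight, add_sub_add_right_eq_sub]

lemma Function.Even.shiftMean (hp_even : p.Even) (hf_even : f.Even) :
    (shiftMean p f).Even := fun c => by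
  rw [_root_.shiftMean, _root_.shiftMean, ← (Equiv.neg ℤ).tsum_eq]
  refine tsum_congr fun n => ?_
  rw [Equiv.neg_apply, hf_even, show -n - -c = -(n - c) by ring, hp_even]

lemma abs_shiftMean_le (hp0 : ∀ n, 0 ≤ p n) (hp : HasSum p 1) {C : ℝ}
    (hf : ∀ n, |f n| ≤ C) (c : ℤ) : |shiftMean p f c| ≤ C :=
  abs_tsum_mul_le (fun n => hp0 (n - c)) (hasSum_comp_sub hp c) hf

lemma shiftMean_add_one_sub (hp0 : ∀ n, 0 ≤ p n) (hp : HasSum p 1) {C : ℝ}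
    (hf : ∀ n, |f n| ≤ C) (c : ℤ) :
    shiftMean p f (c + 1) - shiftMean p f c = ∑' n, p (n - c) * (f (n + 1) - f n) := by
  have hw0 : ∀ n, 0 ≤ p (n - c) := fun n => hp0 (n - c)
  have hw := (hasSum_comp_sub hp c).summable
  rw [shiftMean_add_one, shiftMean, ← (summable_mul_of_abs_le hw0 hw fun n => hf (n + 1)).tsum_sub
    (summable_mul_of_abs_le hw0 hw hf)]
  simp only [mul_sub]

lemma shiftMean_le_shiftMean_add_one (hp0 : ∀ n, 0 ≤ p n) (hp : HasSum p 1) (hp_even : p.Even)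
    (hp_anti : AntitoneOn p (Ici 0)) (hf : IsEvenMonotoneBounded f) {c : ℤ} (hc : 0 ≤ c) :
    shiftMean p f c ≤ shiftMean p f (c + 1) := by
  obtain ⟨C, hC⟩ := hf.bdd
  have hsum : Summable fun n => p (n - c) * (f (n + 1) - f n) :=
    summable_mul_of_abs_le (fun n => hp0 (n - c)) (hasSum_comp_sub hp c).summable (C := C + C)
      fun n => (abs_sub _ _).trans (add_le_add (hC (n + 1)) (hC n))
  have hpair : ∀ k : ℕ, p (k - c) * (f (k + 1) - f k) + p (-(k + 1) - c) * (f (-(k + 1) + 1) -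
      f (-(k + 1))) = (p (k - c) - p (k + 1 + c)) * (f (k + 1) - f k) := fun k => by
    rw [show -((k : ℤ) + 1) - c = -(k + 1 + c) by ring, show -((k : ℤ) + 1) + 1 = -k by ring,
      hp_even, hf.even, hf.even]
    ring
  rw [← sub_nonneg, shiftMean_add_one_sub hp0 hp hC, ← tsum_nat_add_neg_add_one hsum]
  refine tsum_nonneg fun k => ?_
  rw [hpair]
  have hk : (0 : ℤ) ≤ k := k.cast_nonneg
  refine mul_nonneg (sub_nonneg.mpr (hp_even.apply_le_apply_of_abs_le hp_anti ?_)) ?_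
  · rw [abs_of_nonneg (by omega : (0 : ℤ) ≤ k + 1 + c), abs_le]
    constructor <;> omega
  · exact sub_nonneg.mpr (hf.monotoneOn hk (mem_Ici.mpr (by omega)) (by omega))

lemma IsEvenMonotoneBounded.shiftMean (hp0 : ∀ n, 0 ≤ p n) (hp : HasSum p 1) (hp_even : p.Even)
    (hp_anti : AntitoneOn p (Ici 0)) (hf : IsEvenMonotoneBounded f) :
    IsEvenMonotoneBounded (shiftMean p f) where
  even := hp_even.shiftMean hf.even
  monotoneOn := monotoneOn_of_le_add_one ordConnected_Ici fun _ _ hc _ =>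
    shiftMean_le_shiftMean_add_one hp0 hp hp_even hp_anti hf hc
  bdd := hf.bdd.imp fun _ hC => abs_shiftMean_le hp0 hp hC

end ShiftMean

namespace IsEvenMonotoneBounded

variable {f g : ℤ → ℝ}

lemma const (A : ℝ) : IsEvenMonotoneBounded fun _ => A :=
  ⟨Function.Even.const A, fun _ _ _ _ _ => le_rfl, ⟨|A|, fun _ => le_rfl⟩⟩

lemma add (hf : IsEvenMonotoneBounded f) (hg : IsEvenMonotoneBounded g) :
    IsEvenMonotoneBounded fun n => f n + g n where
  even := hf.even.add hg.even
  monotoneOn := hf.monotoneOn.add hg.monotoneOn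
  bdd := by
    obtain ⟨C, hC⟩ := hf.bdd
    obtain ⟨D, hD⟩ := hg.bdd
    exact ⟨C + D, fun n => (abs_add_le _ _).trans (add_le_add (hC n) (hD n))⟩

lemma const_mul (hf : IsEvenMonotoneBounded f) {r : ℝ} (hr : 0 ≤ r) :
    IsEvenMonotoneBounded fun n => r * f n where
  even := hf.even.const_smul r
  monotoneOn := fun _ hx _ hy hxy => mul_le_mul_of_nonneg_left (hf.monotoneOn hx hy hxy) hr
  bdd := by
    obtain ⟨C, hC⟩ := hf.bdd
    refine ⟨r * C, fun n => ?_⟩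
    rw [abs_mul, abs_of_nonneg hr]
    exact mul_le_mul_of_nonneg_left (hC n) hr

lemma comp_mul (hf : IsEvenMonotoneBounded f) {a : ℤ} (ha : 0 ≤ a) :
    IsEvenMonotoneBounded fun n => f (a * n) where
  even := fun n => show f (a * -n) = f (a * n) by rw [mul_neg, hf.even]
  monotoneOn := fun _ hx _ hy hxy => hf.monotoneOn (mul_nonneg ha hx) (mul_nonneg ha hy)
    (mul_le_mul_of_nonneg_left hxy ha)
  bdd := hf.bdd.imp fun _ hC n => hC (a * n)

lemma const_min (hf : IsEvenMonotoneBounded f) (A : ℝ) :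
    IsEvenMonotoneBounded fun n => min A (f n) where
  even := fun n => show min A (f (-n)) = min A (f n) by rw [hf.even]
  monotoneOn := fun _ hx _ hy hxy => min_le_min_left A (hf.monotoneOn hx hy hxy)
  bdd := by
    obtain ⟨C, hC⟩ := hf.bdd
    refine ⟨max |A| C, fun n => ?_⟩
    rcases min_choice A (f n) with h | h <;> rw [h]
    · exact le_max_left _ _
    · exact (hC n).trans (le_max_right _ _)

end IsEvenMonotoneBounded

theorem stmt_5_general (p : ℤ → ℝ) (hp_nonneg : ∀ n, 0 ≤ p n) (hp_sum : HasSum p 1)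
    (hp_sym : ∀ e : ℤ, p (-e) = p e)
    (hp_unimodal : ∀ e : ℤ, 0 ≤ e → p (e + 1) ≤ p e)
    (d : ℤ → ℝ) (hd_bdd : ∃ C, ∀ e, |d e| ≤ C) (hd_even : ∀ e : ℤ, d (-e) = d e)
    (hd_mono : ∀ e₁ e₂ : ℤ, 0 ≤ e₂ → e₂ ≤ e₁ → d e₂ ≤ d e₁)
    (a : ℤ) (ha : 0 < a) (lam : ℝ) (β : ℝ) (hβ : β ∈ Set.Ioo (0 : ℝ) 1)
    (T : ℕ) (V : ℕ → ℤ → ℝ)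
    (hVT : ∀ e, V (T + 1) e = 0)
    (hV : ∀ t, 1 ≤ t → t ≤ T → ∀ e, V t e =
      min ((1 - β) * lam + β * ∑' n : ℤ, p n * V (t + 1) n)
          ((1 - β) * d e + β * ∑' n : ℤ, p (n - a * e) * V (t + 1) n)) :
    ∀ t, 1 ≤ t → t ≤ T + 1 →
      (∀ e : ℤ, V t e = V t (-e)) ∧ (∀ e : ℤ, 0 ≤ e → V t e ≤ V t (e + 1)) := by
  have hp_anti : AntitoneOn p (Ici 0) :=
    antitoneOn_of_add_one_le ordConnected_Ici fun e _ he _ => hp_unimodal e he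
  have hd : IsEvenMonotoneBounded d :=
    ⟨hd_even, fun x hx y _ hxy => hd_mono y x hx hxy, hd_bdd⟩
  intro t ht htT
  have hVt : IsEvenMonotoneBounded (V t) := by
    refine Nat.decreasingInduction' (P := fun t => IsEvenMonotoneBounded (V t)) ?_ htT ?_
    · intro k hk htk hnext
      rw [funext (hV k (ht.trans htk) (Nat.lt_succ_iff.mp hk))]
      exact ((hd.const_mul (sub_nonneg.mpr hβ.2.le)).add
        (((hnext.shiftMean hp_nonneg hp_sum hp_sym hp_anti).comp_mul ha.le).const_mul
          hβ.1.le)).const_min _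
    · simpa only [funext hVT] using IsEvenMonotoneBounded.const 0
  exact ⟨fun e => (hVt.even e).symm,
    fun e he => hVt.monotoneOn he (mem_Ici.mpr (by omega)) (le_add_of_nonneg_right zero_le_one)⟩

/-- for symmetric unimodal innovations and even monotone distortion, the
finite-horizon value functions are even and nondecreasing on the nonnegative integers. -/
theorem stmt_5 (p : ℤ → ℝ) (hp_nonneg : ∀ n, 0 ≤ p n) (hp_sum : HasSum p 1)
    (hp_sym : ∀ e : ℤ, p (-e) = p e)
    (hp_unimodal : ∀ e : ℤ, 0 ≤ e → p (e + 1) ≤ p e)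
    (d : ℤ → ℝ) (hd_bdd : ∃ C, ∀ e, |d e| ≤ C) (hd_even : ∀ e : ℤ, d (-e) = d e)
    (hd0 : d 0 = 0)
    (hd_mono : ∀ e₁ e₂ : ℤ, 0 ≤ e₂ → e₂ ≤ e₁ → d e₂ ≤ d e₁)
    (a : ℤ) (ha : 0 < a) (lam : ℝ) (hlam : 0 < lam) (β : ℝ) (hβ : β ∈ Set.Ioo (0 : ℝ) 1)
    (T : ℕ) (V : ℕ → ℤ → ℝ)
    (hVT : ∀ e, V (T + 1) e = 0)
    (hV : ∀ t, 1 ≤ t → t ≤ T → ∀ e, V t e =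
      min ((1 - β) * lam + β * ∑' n : ℤ, p n * V (t + 1) n)
          ((1 - β) * d e + β * ∑' n : ℤ, p (n - a * e) * V (t + 1) n)) :
    ∀ t, 1 ≤ t → t ≤ T + 1 →
      (∀ e : ℤ, V t e = V t (-e)) ∧ (∀ e : ℤ, 0 ≤ e → V t e ≤ V t (e + 1)) :=
  stmt_5_general p hp_nonneg hp_sum hp_sym hp_unimodal d hd_bdd hd_even hd_mono a ha lam β hβ T V
    hVT hV
end

section
/- Let p : ℤ → ℝ be a probability mass function that is symmetric (p_e = p_{−e}) and unimodal (p_e ≥ p_{e+1} for all e ≥ 0), let d : ℤ → ℝ be bounded, even, with d(0) = 0 and nondecreasing on nonnegative integers, and fix a ∈ ℤ, λ > 0, β ∈ (0,1). Let V_β(·;λ) be the unique bounded fixed point of the Bellman operator (TV)(e) = min{ (1−β)λ + β Σ_{w∈ℤ} p_w V(w), (1−β)d(e) + β Σ_{w∈ℤ} p_w V(ae+w) }. Then V_β(·;λ) is even and nondecreasing on ℤ_{≥0} (V_β(e;λ) = V_β(−e;λ) and V_β(e;λ) ≤ V_β(e+1;λ) for e ≥ 0); moreover, the fixed points obtained for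 parameter a and for parameter −a coincide. -/
/-!
The Bellman operator `T` is a `β`-contraction in the sup norm, so a bounded fixed point is
unique and is the pointwise limit of the value iterates `T^[n] 0`. Call `f : ℤ → ℝ`
abs-monotone if `|x| ≤ |y| → f x ≤ f y` (even and nondecreasing on `ℤ≥0`). For a symmetric
unimodal pmf `p`, averaging `x ↦ ∑ p w f (x + w)` preserves abs-monotonicity: in
`∑ p w (f (x + 1 + w) - f (x + w))` the increments at `u = n` and `u = -(n + 1)` pair up to
`(p (n - x) - p (n + 1 + x)) (f (n + 1) - f n) ≥ 0`. Hence `T` preserves abs-monotone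
functions, and so does the pointwise limit `V`. Since `V` is even, it is also a fixed point of
the operator for `-a`, and uniqueness gives `V' = V`.
-/

open Filter Topology Function

def AbsMonotone {α : Type*} [Preorder α] (f : ℤ → α) : Prop :=
  ∀ ⦃x y : ℤ⦄, |x| ≤ |y| → f x ≤ f y

def AbsAntitone {α : Type*} [Preorder α] (f : ℤ → α) : Prop :=
  ∀ ⦃x y : ℤ⦄, |x| ≤ |y| → f y ≤ f x

section AbsMonotone

variable {α : Type*}

lemma AbsMonotone.of_le_succ [Preorder α] {f : ℤ → α} (heven : f.Even)
    (hsucc : ∀ e, 0 ≤ e → f e ≤ f (e + 1)) : AbsMonotone f := by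
  have habs : ∀ x, f x = f |x| := fun x => by
    rcases abs_choice x with h | h <;> rw [h]
    rw [heven]
  intro x y hxy
  rw [habs x, habs y]
  refine Int.leInduction (motive := fun z _ => f |x| ≤ f z) le_rfl
    (fun z hz ih => ih.trans (hsucc z ((abs_nonneg x).trans hz))) |y| hxy

lemma AbsAntitone.of_succ_le [Preorder α] {f : ℤ → α} (heven : f.Even)
    (hsucc : ∀ e, 0 ≤ e → f (e + 1) ≤ f e) : AbsAntitone f :=
  AbsMonotone.of_le_succ (α := αᵒᵈ) heven hsucc

lemma AbsMonotone.even [PartialOrder α] {f : ℤ → α} (hf : AbsMonotone f) : f.Even := fun x =>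
  le_antisymm (hf (abs_neg x).le) (hf (abs_neg x).ge)

lemma AbsAntitone.even [PartialOrder α] {f : ℤ → α} (hf : AbsAntitone f) : f.Even :=
  AbsMonotone.even (α := αᵒᵈ) hf

lemma AbsMonotone.comp_mul_left [Preorder α] {f : ℤ → α} (hf : AbsMonotone f) (a : ℤ) :
    AbsMonotone fun x => f (a * x) := fun x y hxy => by
  apply hf
  rw [abs_mul, abs_mul]
  exact mul_le_mul_of_nonneg_left hxy (abs_nonneg a)

end AbsMonotone

section Expectation

variable {ι : Type*} {p : ι → ℝ}

lemma summable_mul_of_abs_le_s6 (hp0 : ∀ i, 0 ≤ p i) (hp : Summable p) {f : ι → ℝ} {C : ℝ}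
    (hf : ∀ i, |f i| ≤ C) : Summable fun i => p i * f i :=
  (hp.mul_right C).of_norm_bounded fun i => by
    rw [norm_mul, Real.norm_eq_abs, Real.norm_eq_abs, abs_of_nonneg (hp0 i)]
    exact mul_le_mul_of_nonneg_left (hf i) (hp0 i)

lemma abs_tsum_mul_le_s6 (hp0 : ∀ i, 0 ≤ p i) (hp1 : HasSum p 1) {f : ι → ℝ} {C : ℝ}
    (hf : ∀ i, |f i| ≤ C) : |∑' i, p i * f i| ≤ C := by
  have hs := summable_mul_of_abs_le_s6 hp0 hp1.summable hf
  rw [abs_le]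
  constructor
  · simpa using hasSum_le (fun i => by nlinarith [(abs_le.1 (hf i)).1, hp0 i])
      (hp1.mul_right (-C)) hs.hasSum
  · simpa using hasSum_le (fun i => by nlinarith [(abs_le.1 (hf i)).2, hp0 i])
      hs.hasSum (hp1.mul_right C)

lemma abs_tsum_mul_sub_tsum_mul_le (hp0 : ∀ i, 0 ≤ p i) (hp1 : HasSum p 1) {f g : ι → ℝ}
    {Cf Cg M : ℝ} (hf : ∀ i, |f i| ≤ Cf) (hg : ∀ i, |g i| ≤ Cg) (hfg : ∀ i, |f i - g i| ≤ M) :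
    |∑' i, p i * f i - ∑' i, p i * g i| ≤ M := by
  rw [← (summable_mul_of_abs_le_s6 hp0 hp1.summable hf).tsum_sub
    (summable_mul_of_abs_le_s6 hp0 hp1.summable hg)]
  simpa only [mul_sub] using abs_tsum_mul_le_s6 hp0 hp1 hfg

end Expectation

noncomputable def smooth (p f : ℤ → ℝ) (x : ℤ) : ℝ :=
  ∑' w, p w * f (x + w)

section Smooth

variable {p f : ℤ → ℝ}

lemma even_smooth (hp : p.Even) (hf : f.Even) : (smooth p f).Even := fun x => by
  rw [smooth, ← (Equiv.neg ℤ).tsum_eq]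
  refine tsum_congr fun w => ?_
  rw [Equiv.neg_apply, hp, ← hf]
  ring_nf

lemma smooth_le_smooth_add_one (hp0 : ∀ e, 0 ≤ p e) (hps : Summable p) (hp : AbsAntitone p)
    (hf : AbsMonotone f) {C : ℝ} (hfC : ∀ e, |f e| ≤ C) {x : ℤ} (hx : 0 ≤ x) :
    smooth p f x ≤ smooth p f (x + 1) := by
  set G : ℤ → ℝ := fun u => p (u - x) * (f (u + 1) - f u)
  have hG : HasSum G (smooth p f (x + 1) - smooth p f x) := by
    have h1 := summable_mul_of_abs_le_s6 hp0 hps (f := fun w => f (x + 1 + w)) fun _ => hfC _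
    have h0 := summable_mul_of_abs_le_s6 hp0 hps (f := fun w => f (x + w)) fun _ => hfC _
    have hshift : G ∘ Equiv.addLeft x = fun w => p w * f (x + 1 + w) - p w * f (x + w) := by
      funext w
      simp only [G, comp_apply, Equiv.coe_addLeft, add_sub_cancel_left]
      ring_nf
    rw [← (Equiv.addLeft x).hasSum_iff, hshift]
    exact h1.hasSum.sub h0.hasSum
  have hpair : ∀ n : ℕ, 0 ≤ G n + G (-(n + 1)) := fun n => by
    have hfn : f n ≤ f (n + 1) := hf (by rw [abs_of_nonneg (by positivity : (0 : ℤ) ≤ n),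
      abs_of_nonneg (by positivity : (0 : ℤ) ≤ n + 1)]; omega)
    have hpn : p (n + 1 + x) ≤ p (n - x) := hp (by
      rw [abs_of_nonneg (by positivity : (0 : ℤ) ≤ n + 1 + x), abs_le]; constructor <;> omega)
    have e1 : f (-(n + 1) + 1) = f n := by rw [show -((n : ℤ) + 1) + 1 = -n by ring, hf.even]
    have e2 : p (-(n + 1) - x) = p (n + 1 + x) := by
      rw [show -((n : ℤ) + 1) - x = -(n + 1 + x) by ring, hp.even]
    have e3 : f (-(n + 1)) = f (n + 1) := hf.even _
    simp only [G, e1, e2, e3]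
    nlinarith [mul_nonneg (sub_nonneg.2 hpn) (sub_nonneg.2 hfn)]
  linarith [hG.nat_add_neg_add_one.nonneg hpair]

lemma AbsMonotone.smooth (hp0 : ∀ e, 0 ≤ p e) (hps : Summable p) (hp : AbsAntitone p)
    (hf : AbsMonotone f) {C : ℝ} (hfC : ∀ e, |f e| ≤ C) : AbsMonotone (smooth p f) :=
  .of_le_succ (even_smooth hp.even hf.even)
    fun _ hx => smooth_le_smooth_add_one hp0 hps hp hf hfC hx

end Smooth

noncomputable def bellman (p d : ℤ → ℝ) (lam β : ℝ) (a : ℤ) (f : ℤ → ℝ) (e : ℤ) : ℝ :=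
  min ((1 - β) * lam + β * ∑' w, p w * f w) ((1 - β) * d e + β * smooth p f (a * e))

section Bellman

variable {p d : ℤ → ℝ} {lam β : ℝ} {a : ℤ}

lemma bellman_neg (hp : p.Even) {f : ℤ → ℝ} (hf : f.Even) :
    bellman p d lam β (-a) f = bellman p d lam β a f := by
  funext e
  rw [bellman, bellman, neg_mul, even_smooth hp hf]

lemma AbsMonotone.bellman {f : ℤ → ℝ} (hf : AbsMonotone f) (hp0 : ∀ e, 0 ≤ p e) (hps : Summable p)
    (hp : AbsAntitone p) (hd : AbsMonotone d) (hβ0 : 0 ≤ β) (hβ1 : β ≤ 1) {C : ℝ}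
    (hfC : ∀ e, |f e| ≤ C) : AbsMonotone (bellman p d lam β a f) := fun x y hxy => by
  have hsm := (hf.smooth hp0 hps hp hfC).comp_mul_left a hxy
  have hdxy := hd hxy
  unfold _root_.bellman
  gcongr

variable (hp0 : ∀ e, 0 ≤ p e) (hp1 : HasSum p 1) (hβ0 : 0 ≤ β)
include hp0 hp1 hβ0

lemma abs_bellman_sub_bellman_le {f g : ℤ → ℝ} {Cf Cg M : ℝ} (hf : ∀ e, |f e| ≤ Cf)
    (hg : ∀ e, |g e| ≤ Cg) (hfg : ∀ e, |f e - g e| ≤ M) (e : ℤ) :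
    |bellman p d lam β a f e - bellman p d lam β a g e| ≤ β * M := by
  refine (abs_min_sub_min_le_max _ _ _ _).trans (max_le ?_ ?_)
  · rw [add_sub_add_left_eq_sub, ← mul_sub, abs_mul, abs_of_nonneg hβ0]
    exact mul_le_mul_of_nonneg_left (abs_tsum_mul_sub_tsum_mul_le hp0 hp1 hf hg hfg) hβ0
  · rw [add_sub_add_left_eq_sub, ← mul_sub, abs_mul, abs_of_nonneg hβ0]
    exact mul_le_mul_of_nonneg_left
      (abs_tsum_mul_sub_tsum_mul_le hp0 hp1 (fun _ => hf _) (fun _ => hg _) fun _ => hfg _) hβ0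

lemma abs_iterate_bellman_sub_le {f g : ℤ → ℝ} {C M : ℝ}
    (hg : IsFixedPt (bellman p d lam β a) g) (hgC : ∀ e, |g e| ≤ C)
    (hfg : ∀ e, |f e - g e| ≤ M) (n : ℕ) (e : ℤ) :
    |(bellman p d lam β a)^[n] f e - g e| ≤ β ^ n * M := by
  induction n generalizing e with
  | zero => simpa using hfg e
  | succ n ih =>
    have hbdd : ∀ e, |(bellman p d lam β a)^[n] f e| ≤ C + β ^ n * M := fun e => by
      linarith [abs_sub_abs_le_abs_sub ((bellman p d lam β a)^[n] f e) (g e), ih e, hgC e]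
    rw [iterate_succ_apply', ← hg, pow_succ, mul_comm _ β, mul_assoc]
    exact abs_bellman_sub_bellman_le hp0 hp1 hβ0 hbdd hgC ih e

lemma tendsto_iterate_bellman (hβ1 : β < 1) {f g : ℤ → ℝ} {Cf Cg : ℝ}
    (hg : IsFixedPt (bellman p d lam β a) g) (hf : ∀ e, |f e| ≤ Cf) (hgC : ∀ e, |g e| ≤ Cg)
    (e : ℤ) : Tendsto (fun n => (bellman p d lam β a)^[n] f e) atTop (𝓝 (g e)) := by
  have hlim : Tendsto (fun n : ℕ => β ^ n * (Cf + Cg)) atTop (𝓝 0) := by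
    simpa using (tendsto_pow_atTop_nhds_zero_of_lt_one hβ0 hβ1).mul_const (Cf + Cg)
  rw [tendsto_iff_norm_sub_tendsto_zero]
  refine squeeze_zero (fun _ => norm_nonneg _) (fun n => ?_) hlim
  refine abs_iterate_bellman_sub_le hp0 hp1 hβ0 hg hgC (fun e => ?_) n e
  linarith [abs_sub (f e) (g e), hf e, hgC e]

lemma bellman_fixedPt_unique (hβ1 : β < 1) {f g : ℤ → ℝ} {Cf Cg : ℝ}
    (hf : IsFixedPt (bellman p d lam β a) f) (hg : IsFixedPt (bellman p d lam β a) g)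
    (hfC : ∀ e, |f e| ≤ Cf) (hgC : ∀ e, |g e| ≤ Cg) : f = g := by
  funext e
  have h := tendsto_iterate_bellman hp0 hp1 hβ0 hβ1 hg hfC hgC e
  simp only [(hf.iterate _).eq] at h
  exact tendsto_const_nhds_iff.1 h

lemma absMonotone_of_bellman_fixedPt (hβ1 : β < 1) (hp : AbsAntitone p)
    (hd : AbsMonotone d) {V : ℤ → ℝ} {C : ℝ} (hV : IsFixedPt (bellman p d lam β a) V)
    (hVC : ∀ e, |V e| ≤ C) : AbsMonotone V := by
  set u : ℕ → ℤ → ℝ := fun n => (bellman p d lam β a)^[n] 0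
  have hzero : ∀ e, |(0 : ℤ → ℝ) e - V e| ≤ C := fun e => by simpa using hVC e
  have hu : ∀ n, AbsMonotone (u n) := fun n => by
    induction n with
    | zero => exact fun _ _ _ => le_rfl
    | succ n ih =>
      have hbdd : ∀ e, |u n e| ≤ C + β ^ n * C := fun e => by
        linarith [abs_sub_abs_le_abs_sub (u n e) (V e),
          abs_iterate_bellman_sub_le hp0 hp1 hβ0 hV hVC hzero n e, hVC e]
      simp only [u, iterate_succ_apply']
      exact ih.bellman hp0 hp1.summable hp hd hβ0 hβ1.le hbdd
  intro x y hxy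
  have hconst : ∀ e, |(0 : ℤ → ℝ) e| ≤ 0 := by simp
  exact le_of_tendsto_of_tendsto' (tendsto_iterate_bellman hp0 hp1 hβ0 hβ1 hV hconst hVC x)
    (tendsto_iterate_bellman hp0 hp1 hβ0 hβ1 hV hconst hVC y) fun n => hu n hxy

end Bellman

theorem stmt_6_general (p : ℤ → ℝ) (hp_nonneg : ∀ n, 0 ≤ p n) (hp_sum : HasSum p 1)
    (hp_sym : ∀ e : ℤ, p (-e) = p e)
    (hp_unimodal : ∀ e : ℤ, 0 ≤ e → p (e + 1) ≤ p e)
    (d : ℤ → ℝ) (hd_even : ∀ e : ℤ, d (-e) = d e)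
    (hd_mono : ∀ e₁ e₂ : ℤ, 0 ≤ e₂ → e₂ ≤ e₁ → d e₂ ≤ d e₁)
    (a : ℤ) (lam : ℝ) (β : ℝ) (hβ : β ∈ Set.Ioo (0 : ℝ) 1)
    -- V is a bounded fixed point of the Bellman operator for parameter a
    (V : ℤ → ℝ) (hV_bdd : ∃ C, ∀ e, |V e| ≤ C)
    (hV : ∀ e : ℤ, V e =
      min ((1 - β) * lam + β * ∑' w : ℤ, p w * V w)
          ((1 - β) * d e + β * ∑' w : ℤ, p w * V (a * e + w)))
    -- V' is a bounded fixed point of the Bellman operator for parameter -a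
    (V' : ℤ → ℝ) (hV'_bdd : ∃ C, ∀ e, |V' e| ≤ C)
    (hV' : ∀ e : ℤ, V' e =
      min ((1 - β) * lam + β * ∑' w : ℤ, p w * V' w)
          ((1 - β) * d e + β * ∑' w : ℤ, p w * V' ((-a) * e + w))) :
    (∀ e : ℤ, V e = V (-e)) ∧ (∀ e : ℤ, 0 ≤ e → V e ≤ V (e + 1)) ∧ V' = V := by
  obtain ⟨C, hVC⟩ := hV_bdd
  obtain ⟨C', hV'C⟩ := hV'_bdd
  have hp : AbsAntitone p := .of_succ_le hp_sym hp_unimodal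
  have hd : AbsMonotone d := .of_le_succ hd_even fun e he => hd_mono _ _ he (by omega)
  have hfix : IsFixedPt (bellman p d lam β a) V := (funext hV).symm
  have hfix' : IsFixedPt (bellman p d lam β (-a)) V' := (funext hV').symm
  have hmono : AbsMonotone V :=
    absMonotone_of_bellman_fixedPt hp_nonneg hp_sum hβ.1.le hβ.2 hp hd hfix hVC
  have hfix_neg : IsFixedPt (bellman p d lam β (-a)) V := by
    rwa [IsFixedPt, bellman_neg hp_sym hmono.even]
  refine ⟨fun e => (hmono.even e).symm, fun e he => hmono ?_,
    bellman_fixedPt_unique hp_nonneg hp_sum hβ.1.le hβ.2 hfix' hfix_neg hV'C hVC⟩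
  rw [abs_of_nonneg he, abs_of_nonneg (by omega)]
  omega

/-- the unique bounded fixed point of the infinite-horizon Bellman operator is
even and nondecreasing on the nonnegative integers, and the fixed points for parameter `a`
and parameter `-a` coincide. -/
theorem stmt_6 (p : ℤ → ℝ) (hp_nonneg : ∀ n, 0 ≤ p n) (hp_sum : HasSum p 1)
    (hp_sym : ∀ e : ℤ, p (-e) = p e)
    (hp_unimodal : ∀ e : ℤ, 0 ≤ e → p (e + 1) ≤ p e)
    (d : ℤ → ℝ) (hd_bdd : ∃ C, ∀ e, |d e| ≤ C) (hd_even : ∀ e : ℤ, d (-e) = d e)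
    (hd0 : d 0 = 0)
    (hd_mono : ∀ e₁ e₂ : ℤ, 0 ≤ e₂ → e₂ ≤ e₁ → d e₂ ≤ d e₁)
    (a : ℤ) (lam : ℝ) (hlam : 0 < lam) (β : ℝ) (hβ : β ∈ Set.Ioo (0 : ℝ) 1)
    -- V is a bounded fixed point of the Bellman operator for parameter a
    (V : ℤ → ℝ) (hV_bdd : ∃ C, ∀ e, |V e| ≤ C)
    (hV : ∀ e : ℤ, V e =
      min ((1 - β) * lam + β * ∑' w : ℤ, p w * V w)
          ((1 - β) * d e + β * ∑' w : ℤ, p w * V (a * e + w)))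
    -- V' is a bounded fixed point of the Bellman operator for parameter -a
    (V' : ℤ → ℝ) (hV'_bdd : ∃ C, ∀ e, |V' e| ≤ C)
    (hV' : ∀ e : ℤ, V' e =
      min ((1 - β) * lam + β * ∑' w : ℤ, p w * V' w)
          ((1 - β) * d e + β * ∑' w : ℤ, p w * V' ((-a) * e + w))) :
    (∀ e : ℤ, V e = V (-e)) ∧ (∀ e : ℤ, 0 ≤ e → V e ≤ V (e + 1)) ∧ V' = V :=
  stmt_6_general p hp_nonneg hp_sum hp_sym hp_unimodal d hd_even hd_mono a lam β hβ V hV_bdd hV V'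
    hV'_bdd hV'
end

section
/- Let p : ℤ → ℝ be a probability mass function that is symmetric (p_e = p_{−e} for all e ∈ ℤ) and unimodal (p_e ≥ p_{e+1} for all e ≥ 0). For m ∈ ℤ_{≥0}, x ∈ ℤ_{≥0} and a ∈ ℤ_{>0}, define Q(m|x) = Σ_{n∈ℤ, |n| ≥ m} p_{n − ax}. Then for every fixed m ∈ ℤ_{≥0} and a ∈ ℤ_{>0}, the map x ↦ Q(m|x) is nondecreasing on ℤ_{≥0}: for all 0 ≤ x ≤ x′, Q(m|x) ≤ Q(m|x′). -/
/-!
Writing `Q(m|x) = 1 - Σ_{|n| < m} p(n - ax)`, it suffices that the mass of the window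
`(-m, m)` under the shifted law `p(· - c)` decreases in `c ≥ 0`. Shifting by one more step
loses the mass `p(m - 1 - c)` at the right end and gains `p(-m - c) = p(m + c)` at the left
end, and `|m - 1 - c| ≤ m + c`, so by symmetry and unimodality the loss dominates the gain.
-/

open Finset

lemma sum_Ioo_comp_sub_one_add {M : Type*} [AddCommMonoid M] (f : ℤ → M) {a b : ℤ}
    (hab : a < b) : ∑ n ∈ Ioo a b, f (n - 1) + f (b - 1) = f a + ∑ n ∈ Ioo a b, f n := by
  have hshift : ∑ n ∈ Ioo a b, f (n - 1) = ∑ n ∈ Ioo (a - 1) (b - 1), f n := by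
    simp only [sub_eq_add_neg, ← map_add_right_Ioo a b (-1), sum_map, addRightEmbedding_apply]
  rw [hshift, sum_Ioo_add_eq_sum_Ioc (by omega), Ioc_sub_one_sub_one_eq_Ico,
    add_sum_Ioo_eq_sum_Ico hab]

section SymmetricUnimodal

variable {p : ℤ → ℝ}

lemma antitoneOn_Ici_of_unimodal (hp : ∀ e : ℤ, 0 ≤ e → p (e + 1) ≤ p e) :
    AntitoneOn p (Set.Ici 0) :=
  antitoneOn_of_add_one_le Set.ordConnected_Ici fun e _ he _ => hp e he

lemma apply_le_apply_of_abs_le (hsym : ∀ e, p (-e) = p e) (hanti : AntitoneOn p (Set.Ici 0))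
    {i j : ℤ} (hij : |i| ≤ |j|) : p j ≤ p i := by
  have hp_abs : ∀ e, p |e| = p e := fun e => by
    rcases abs_choice e with h | h <;> simp only [h, hsym]
  rw [← hp_abs i, ← hp_abs j]
  exact hanti (abs_nonneg i) (abs_nonneg j) hij

noncomputable def innerMass (p : ℤ → ℝ) (m c : ℤ) : ℝ :=
  ∑ n ∈ Ioo (-m) m, p (n - c)

lemma hasSum_tail (hp : HasSum p 1) (m c : ℤ) :
    HasSum (fun n => if m ≤ |n| then p (n - c) else 0) (1 - innerMass p m c) := by
  have hshift : HasSum (fun n => p (n - c)) 1 := (Equiv.subRight c).hasSum_iff.mpr hp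
  have hinner : HasSum (fun n => if n ∈ Ioo (-m) m then p (n - c) else 0) (innerMass p m c) := by
    have h : HasSum (fun n => if n ∈ Ioo (-m) m then p (n - c) else 0)
        (∑ n ∈ Ioo (-m) m, if n ∈ Ioo (-m) m then p (n - c) else 0) :=
      hasSum_sum_of_ne_finset_zero fun n hn => if_neg hn
    rwa [sum_ite_mem, inter_self] at h
  have htail : (fun n => if m ≤ |n| then p (n - c) else 0)
      = fun n => p (n - c) - if n ∈ Ioo (-m) m then p (n - c) else 0 := by
    funext n
    have hmem : n ∈ Ioo (-m) m ↔ ¬m ≤ |n| := by rw [mem_Ioo, not_le, abs_lt]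
    by_cases h : m ≤ |n| <;> simp [h, hmem]
  rw [htail]
  exact hshift.sub hinner

lemma innerMass_succ_le (hsym : ∀ e, p (-e) = p e) (hanti : AntitoneOn p (Set.Ici 0))
    (m : ℤ) {c : ℤ} (hc : 0 ≤ c) : innerMass p m (c + 1) ≤ innerMass p m c := by
  rcases le_or_gt m 0 with hm | hm
  · simp [innerMass, Ioo_eq_empty_of_le (show m ≤ -m by omega)]
  have hslide := sum_Ioo_comp_sub_one_add (fun n => p (n - c)) (show -m < m by omega)
  have hends : p (-m - c) ≤ p (m - 1 - c) :=
    apply_le_apply_of_abs_le hsym hanti (by rw [abs_le, abs_of_nonpos (by omega)]; omega)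
  have hW : innerMass p m (c + 1) = ∑ n ∈ Ioo (-m) m, p (n - 1 - c) := by
    simp only [innerMass, sub_sub, add_comm c 1]
  rw [hW, innerMass]
  linarith

lemma innerMass_antitoneOn (hsym : ∀ e, p (-e) = p e) (hanti : AntitoneOn p (Set.Ici 0))
    (m : ℤ) : AntitoneOn (innerMass p m) (Set.Ici 0) :=
  antitoneOn_of_add_one_le Set.ordConnected_Ici fun _ _ hc _ =>
    innerMass_succ_le hsym hanti m hc

end SymmetricUnimodal

theorem stmt_8_general (p : ℤ → ℝ) (hp_sum : HasSum p 1)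
    (hp_sym : ∀ e : ℤ, p (-e) = p e)
    (hp_unimodal : ∀ e : ℤ, 0 ≤ e → p (e + 1) ≤ p e)
    (a : ℤ) (ha : 0 < a) (m : ℤ) :
    ∀ x x' : ℤ, 0 ≤ x → x ≤ x' →
      (∑' n : ℤ, if m ≤ |n| then p (n - a * x) else 0)
        ≤ ∑' n : ℤ, if m ≤ |n| then p (n - a * x') else 0 := by
  intro x x' hx hxx'
  rw [(hasSum_tail hp_sum m _).tsum_eq, (hasSum_tail hp_sum m _).tsum_eq]
  have hmass := innerMass_antitoneOn hp_sym (antitoneOn_Ici_of_unimodal hp_unimodal) m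
  have hshift_nonneg : 0 ≤ a * x := mul_nonneg ha.le hx
  have hshift_le : a * x ≤ a * x' := mul_le_mul_of_nonneg_left hxx' ha.le
  exact sub_le_sub_left (hmass hshift_nonneg (hshift_nonneg.trans hshift_le) hshift_le) 1

/-- for a symmetric unimodal pmf `p` and `a > 0`, the tail probability
`Q(m|x) = Σ_{|n| ≥ m} p_{n - ax}` is nondecreasing in `x` on the nonnegative integers. -/
theorem stmt_8 (p : ℤ → ℝ) (hp_nonneg : ∀ n, 0 ≤ p n) (hp_sum : HasSum p 1)
    (hp_sym : ∀ e : ℤ, p (-e) = p e)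
    (hp_unimodal : ∀ e : ℤ, 0 ≤ e → p (e + 1) ≤ p e)
    (a : ℤ) (ha : 0 < a) (m : ℤ) (hm : 0 ≤ m) :
    ∀ x x' : ℤ, 0 ≤ x → x ≤ x' →
      (∑' n : ℤ, if m ≤ |n| then p (n - a * x) else 0)
        ≤ ∑' n : ℤ, if m ≤ |n| then p (n - a * x') else 0 :=
  stmt_8_general p hp_sum hp_sym hp_unimodal a ha m
end

section
/- Fix k ∈ ℤ_{>0} and p ∈ (0,1/3), and let P^{(k)} be the (2k−1)×(2k−1) matrix indexed by i,j ∈ {−(k−1),…,k−1} with P^{(k)}_{ij} = p if |i−j| = 1, P^{(k)}_{ii} = 1−2p, and 0 otherwise. Then I − P^{(k)} is invertible; letting L = (I − P^{(k)})^{−1} d^{(k)} and M = (I − P^{(k)})^{−1} 𝟏 where d^{(k)} = (|j|)_{j∈{−(k−1),…,k−1}} and 𝟏 is the all-ones vector, the components at index 0 satisfy L_0 = k(k²−1)/(6p) and M_0 = k²/(2p). Consequently, the long-term average distortion and average number of transmissions of the threshold-k strategy satisfy D^{(k)}_1 = L_0/M_0 = (k²−1)/(3k) and N^{(k)}_1 =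 1/M_0 = 2p/k². -/
/-!
`(1 - bdMat p k) f` at an interior point is `p (2 f(x) - f(x-1) - f(x+1))` for any `f` vanishing at
`±k`. The Green's function `(min x y + k)(k - max x y) / (2kp)` is such an `f` in each column and
gives a right inverse, so `1 - bdMat p k` is invertible. `L` and `M` are then the unique solutions
of the Dirichlet problems `p (2 f(x) - f(x-1) - f(x+1)) = |x|` resp. `= 1` with `f(±k) = 0`, which
are the explicit polynomials `((k³ - k) - (|x|³ - |x|)) / (6p)` and `(k² - x²) / (2p)`; evaluating
at `0` gives `L₀` and `M₀`.
-/

open Matrix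

/-- The killed transition matrix of the symmetric birth-death chain on the silent set
`S^{(k)} = {-(k-1), …, k-1}`. -/
noncomputable def bdMat (p : ℝ) (k : ℕ) :
    Matrix ↥(Finset.Ioo (-(k : ℤ)) (k : ℤ)) ↥(Finset.Ioo (-(k : ℤ)) (k : ℤ)) ℝ :=
  fun i j =>
    if |(i : ℤ) - (j : ℤ)| = 1 then p
    else if (i : ℤ) = (j : ℤ) then 1 - 2 * p
    else 0

def bdLaplacian (p : ℝ) (f : ℤ → ℝ) (x : ℤ) : ℝ :=
  p * (2 * f x - f (x - 1) - f (x + 1))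

noncomputable def greenFun (p : ℝ) (k : ℕ) (x y : ℤ) : ℝ :=
  ((min x y + k : ℤ) : ℝ) * ((k - max x y : ℤ) : ℝ) / (2 * k * p)

noncomputable def meanExitTime (p : ℝ) (k : ℕ) (x : ℤ) : ℝ :=
  ((k : ℝ) ^ 2 - (x : ℝ) ^ 2) / (2 * p)

-- The linear term offsets the kink of `|x|³` at `0`, so that `bdLaplacian` returns `|x|` there too.
noncomputable def meanExitCost (p : ℝ) (k : ℕ) (x : ℤ) : ℝ :=
  (((k : ℝ) ^ 3 - k) - (|(x : ℝ)| ^ 3 - |(x : ℝ)|)) / (6 * p)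

section
variable {p : ℝ} {k : ℕ}

lemma one_sub_bdMat_apply (i j : ↥(Finset.Ioo (-(k : ℤ)) (k : ℤ))) :
    (1 - bdMat p k) i j = (if (j : ℤ) = i then 2 * p else 0)
      - (if (j : ℤ) = i - 1 then p else 0) - (if (j : ℤ) = i + 1 then p else 0) := by
  simp only [Matrix.sub_apply, one_apply, bdMat, ← Subtype.coe_inj]
  split_ifs <;> simp only [abs_eq zero_le_one] at * <;> first | (exfalso; omega) | ring

lemma sum_Ioo_ite_eq {f : ℤ → ℝ} (hf_left : f (-k) = 0) (hf_right : f k = 0) {a : ℤ}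
    (ha : -(k : ℤ) ≤ a ∧ a ≤ k) (c : ℝ) :
    (∑ x : ↥(Finset.Ioo (-(k : ℤ)) (k : ℤ)), if (x : ℤ) = a then c * f x else 0) = c * f a := by
  rw [Finset.sum_coe_sort (Finset.Ioo (-(k : ℤ)) k) (fun x => if x = a then c * f x else 0),
    Finset.sum_ite_eq']
  split_ifs with h
  · rfl
  · obtain rfl | rfl : a = -k ∨ a = k := by rw [Finset.mem_Ioo] at h; omega
    all_goals simp [hf_left, hf_right]

lemma one_sub_bdMat_mulVec {f : ℤ → ℝ} (hf_left : f (-k) = 0) (hf_right : f k = 0)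
    (i : ↥(Finset.Ioo (-(k : ℤ)) (k : ℤ))) :
    ((1 - bdMat p k) *ᵥ fun j : ↥(Finset.Ioo (-(k : ℤ)) (k : ℤ)) => f j) i
      = bdLaplacian p f i := by
  obtain ⟨i, hi⟩ := i
  rw [Finset.mem_Ioo] at hi
  simp only [mulVec, dotProduct, one_sub_bdMat_apply, sub_mul, ite_mul, zero_mul,
    Finset.sum_sub_distrib]
  rw [sum_Ioo_ite_eq hf_left hf_right (by omega), sum_Ioo_ite_eq hf_left hf_right (by omega),
    sum_Ioo_ite_eq hf_left hf_right (by omega), bdLaplacian]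
  ring

lemma greenFun_neg_left {y : ℤ} (hy : -(k : ℤ) ≤ y) : greenFun p k (-k) y = 0 := by
  simp [greenFun, min_eq_left hy]

lemma greenFun_right {y : ℤ} (hy : y ≤ k) : greenFun p k k y = 0 := by
  simp [greenFun, max_eq_left hy]

lemma bdLaplacian_greenFun (hk : k ≠ 0) (hp : p ≠ 0) (x y : ℤ) :
    bdLaplacian p (greenFun p k · y) x = if x = y then 1 else 0 := by
  simp only [bdLaplacian, greenFun, min_def, max_def]
  split_ifs <;> subst_vars <;> first
    | (exfalso; omega)
    | (push_cast; field_simp; ring1)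
    | (obtain rfl : y = x - 1 := by omega
       push_cast; field_simp; ring1)

lemma one_sub_bdMat_mul_greenFun (hk : k ≠ 0) (hp : p ≠ 0) :
    (1 - bdMat p k) * Matrix.of (fun i j : ↥(Finset.Ioo (-(k : ℤ)) (k : ℤ)) =>
      greenFun p k i j) = 1 := by
  ext i j
  have hj := Finset.mem_Ioo.1 j.2
  have hcol := one_sub_bdMat_mulVec (p := p) (f := fun x => greenFun p k x j)
    (greenFun_neg_left (by omega)) (greenFun_right (by omega)) i
  rw [bdLaplacian_greenFun hk hp] at hcol
  exact hcol.trans (by simp only [one_apply, Subtype.coe_inj])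

lemma isUnit_det_one_sub_bdMat (hk : k ≠ 0) (hp : p ≠ 0) : IsUnit (1 - bdMat p k).det :=
  isUnit_det_of_right_inverse (one_sub_bdMat_mul_greenFun hk hp)

lemma inv_one_sub_bdMat_mulVec (hk : k ≠ 0) (hp : p ≠ 0) {f g : ℤ → ℝ}
    (hf_left : f (-k) = 0) (hf_right : f k = 0)
    (hfg : ∀ x : ℤ, -(k : ℤ) < x → x < k → bdLaplacian p f x = g x)
    (i : ↥(Finset.Ioo (-(k : ℤ)) (k : ℤ))) :
    ((1 - bdMat p k)⁻¹ *ᵥ fun j : ↥(Finset.Ioo (-(k : ℤ)) (k : ℤ)) => g j) i = f i := by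
  have hg : (fun j : ↥(Finset.Ioo (-(k : ℤ)) (k : ℤ)) => g j)
      = (1 - bdMat p k) *ᵥ fun j : ↥(Finset.Ioo (-(k : ℤ)) (k : ℤ)) => f j := by
    ext ⟨j, hj⟩
    rw [Finset.mem_Ioo] at hj
    rw [one_sub_bdMat_mulVec hf_left hf_right, hfg j hj.1 hj.2]
  rw [hg, mulVec_mulVec, nonsing_inv_mul _ (isUnit_det_one_sub_bdMat hk hp), one_mulVec]

section
variable {p : ℝ} {k : ℕ}

lemma bdLaplacian_meanExitTime (hp : p ≠ 0) (x : ℤ) :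
    bdLaplacian p (meanExitTime p k) x = 1 := by
  simp only [bdLaplacian, meanExitTime]
  push_cast
  field_simp
  ring

lemma bdLaplacian_meanExitCost (hp : p ≠ 0) (x : ℤ) :
    bdLaplacian p (meanExitCost p k) x = |(x : ℝ)| := by
  simp only [bdLaplacian, meanExitCost]
  push_cast
  rcases lt_trichotomy x 0 with hx | rfl | hx
  · have hx' : (x : ℝ) ≤ -1 := by exact_mod_cast Int.le_sub_one_iff.2 hx
    rw [abs_of_neg (by linarith : (x : ℝ) < 0), abs_of_neg (by linarith : (x : ℝ) - 1 < 0),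
      abs_of_nonpos (by linarith : (x : ℝ) + 1 ≤ 0)]
    field_simp
    ring
  · simp only [Int.cast_zero, zero_sub, zero_add, abs_zero, abs_neg, abs_one]
    ring
  · have hx' : (1 : ℝ) ≤ x := by exact_mod_cast hx
    rw [abs_of_pos (by linarith : (0 : ℝ) < x), abs_of_nonneg (by linarith : (0 : ℝ) ≤ x - 1),
      abs_of_pos (by linarith : (0 : ℝ) < x + 1)]
    field_simp
    ring

lemma meanExitTime_zero : meanExitTime p k 0 = (k : ℝ) ^ 2 / (2 * p) := by
  simp [meanExitTime]

lemma meanExitCost_zero : meanExitCost p k 0 = (k : ℝ) * ((k : ℝ) ^ 2 - 1) / (6 * p) := by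
  simp only [meanExitCost, Int.cast_zero, abs_zero]
  ring

end

/-- in the long-term average (β = 1) birth-death example with distortion
`d(e) = |e|`, the pre-transmission quantities satisfy `L₀ = k(k²-1)/(6p)` and
`M₀ = k²/(2p)`, whence `D^{(k)}_1 = (k²-1)/(3k)` and `N^{(k)}_1 = 2p/k²`. -/
theorem stmt_12 (k : ℕ) (hk : 0 < k) (p : ℝ) (hp : p ∈ Set.Ioo (0 : ℝ) (1 / 3)) :
    IsUnit (1 - bdMat p k) ∧
    ((1 - bdMat p k)⁻¹ *ᵥ fun j : ↥(Finset.Ioo (-(k : ℤ)) (k : ℤ)) => ((|(j : ℤ)| : ℤ) : ℝ))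
        ⟨0, by simp only [Finset.mem_Ioo]; omega⟩
      = (k : ℝ) * ((k : ℝ) ^ 2 - 1) / (6 * p) ∧
    ((1 - bdMat p k)⁻¹ *ᵥ fun _ : ↥(Finset.Ioo (-(k : ℤ)) (k : ℤ)) => (1 : ℝ))
        ⟨0, by simp only [Finset.mem_Ioo]; omega⟩
      = (k : ℝ) ^ 2 / (2 * p) ∧
    (((1 - bdMat p k)⁻¹ *ᵥ fun j : ↥(Finset.Ioo (-(k : ℤ)) (k : ℤ)) => ((|(j : ℤ)| : ℤ) : ℝ))
        ⟨0, by simp only [Finset.mem_Ioo]; omega⟩)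
      / (((1 - bdMat p k)⁻¹ *ᵥ fun _ : ↥(Finset.Ioo (-(k : ℤ)) (k : ℤ)) => (1 : ℝ))
        ⟨0, by simp only [Finset.mem_Ioo]; omega⟩)
      = ((k : ℝ) ^ 2 - 1) / (3 * (k : ℝ)) ∧
    1 / (((1 - bdMat p k)⁻¹ *ᵥ fun _ : ↥(Finset.Ioo (-(k : ℤ)) (k : ℤ)) => (1 : ℝ))
        ⟨0, by simp only [Finset.mem_Ioo]; omega⟩)
      = 2 * p / (k : ℝ) ^ 2 := by
  have hp0 : p ≠ 0 := hp.1.ne'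
  have hk0 : k ≠ 0 := hk.ne'
  have hL := inv_one_sub_bdMat_mulVec hk0 hp0 (f := meanExitCost p k)
    (g := fun x => ((|x| : ℤ) : ℝ)) (by simp [meanExitCost]) (by simp [meanExitCost])
    (fun x _ _ => by rw [bdLaplacian_meanExitCost hp0, Int.cast_abs])
    ⟨0, by simp only [Finset.mem_Ioo]; omega⟩
  have hM := inv_one_sub_bdMat_mulVec hk0 hp0 (f := meanExitTime p k) (g := fun _ => 1)
    (by simp [meanExitTime]) (by simp [meanExitTime])
    (fun x _ _ => bdLaplacian_meanExitTime hp0 x)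
    ⟨0, by simp only [Finset.mem_Ioo]; omega⟩
  rw [meanExitCost_zero] at hL
  rw [meanExitTime_zero] at hM
  refine ⟨(isUnit_iff_isUnit_det _).2 (isUnit_det_one_sub_bdMat hk0 hp0), hL, hM, ?_, ?_⟩
  · rw [hL, hM]
    field_simp
    ring
  · rw [hM, one_div_div]
end
end
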